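/- arXiv:0710.2531 — 2 statements merged into one kernel-verified Lean document; each statement's English description precedes it below -/
import Mathlib

section
/- Let δ(t) be a symmetric Laurent polynomial over ℤ, meaning δ(t⁻¹) = δ(t). If (t - 1) divides δ (as a Laurent polynomial), then (t - 1)² divides δ. -/
/-!
Write `δ = (t - 1) q`. Since `t⁻¹ - 1 = -t⁻¹ (t - 1)`, symmetry of `δ` and cancellation of `t - 1`
in the domain `ℤ[t, t⁻¹]` give `q = -t⁻¹ q(t⁻¹)`. Evaluating at `t = 1` yields `q(1) = -q(1)`,
so `q(1) = 0` and `t - 1` divides `q` by the factor theorem.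
-/

open LaurentPolynomial

namespace LaurentPolynomial

variable {R : Type*} [CommRing R]

lemma eval₂_one_invert (f : R[T;T⁻¹]) :
    eval₂ (RingHom.id R) 1 (invert f) = eval₂ (RingHom.id R) 1 f := by
  have h : (eval₂ (RingHom.id R) 1).comp (invert (R := R)).toRingHom = eval₂ (RingHom.id R) 1 :=
    AddMonoidAlgebra.ringHom_ext (fun r => by simp) (fun n => by simp)
  exact DFunLike.congr_fun h f

theorem T_one_sub_one_dvd_iff {f : R[T;T⁻¹]} :
    T 1 - 1 ∣ f ↔ eval₂ (RingHom.id R) 1 f = 0 := by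
  refine ⟨fun ⟨g, hg⟩ => by simp [hg], fun hf => ?_⟩
  obtain ⟨n, p, hp⟩ := f.exists_T_pow
  have hroot : p.IsRoot 1 := by
    simpa [hf] using congrArg (eval₂ (RingHom.id R) 1) hp
  obtain ⟨r, rfl⟩ := Polynomial.dvd_iff_isRoot.mpr hroot
  refine ⟨Polynomial.toLaurent r * T (-n), ?_⟩
  calc f = f * T n * T (-n) := by rw [mul_T_assoc, add_neg_cancel, T_zero, mul_one]
    _ = (T 1 - 1) * (Polynomial.toLaurent r * T (-n)) := by simp [← hp, mul_assoc]

lemma invert_T_one_sub_one : invert (T 1 - 1 : R[T;T⁻¹]) = -T (-1) * (T 1 - 1) := by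
  rw [map_sub, invert_T, map_one, neg_mul, mul_sub, ← T_add]
  simp

lemma T_one_sub_one_ne_zero [Nontrivial R] : (T 1 - 1 : R[T;T⁻¹]) ≠ 0 := by
  simpa using Polynomial.toLaurent_ne_zero.mpr (Polynomial.X_sub_C_ne_zero (1 : R))

lemma eq_neg_T_mul_invert_of_invert_eq [IsDomain R] {f q : R[T;T⁻¹]} (hsym : invert f = f)
    (hq : f = (T 1 - 1) * q) : q = -T (-1) * invert q :=
  mul_left_cancel₀ T_one_sub_one_ne_zero <|
    calc (T 1 - 1) * q = invert f := by rw [hsym, hq]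
      _ = (T 1 - 1) * (-T (-1) * invert q) := by
        rw [hq, map_mul, invert_T_one_sub_one]; ring

end LaurentPolynomial

/-- If `δ ∈ ℤ[t,t⁻¹]` is symmetric (`δ(t⁻¹) = δ(t)`) and `t - 1`
divides `δ`, then `(t - 1)²` divides `δ` in the Laurent polynomial ring. -/
theorem stmt4 (δ : ℤ[T;T⁻¹]) (hsym : LaurentPolynomial.invert δ = δ)
    (hdvd : (T 1 - 1 : ℤ[T;T⁻¹]) ∣ δ) :
    (T 1 - 1 : ℤ[T;T⁻¹]) ^ 2 ∣ δ := by
  obtain ⟨q, rfl⟩ := hdvd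
  have hanti := eq_neg_T_mul_invert_of_invert_eq hsym rfl
  have hq : eval₂ (RingHom.id ℤ) 1 q = 0 := by
    have h := congrArg (eval₂ (RingHom.id ℤ) 1) hanti
    simp only [map_mul, map_neg, eval₂_T, one_zpow, Units.val_one, eval₂_one_invert,
      neg_one_mul] at h
    omega
  obtain ⟨r, rfl⟩ := T_one_sub_one_dvd_iff.mpr hq
  exact ⟨r, by ring⟩
end

section
/- Let p > 0 and let f, g ∈ ℤ[t, t⁻¹]. Suppose f has the property (*): for each residue class i mod p there is exactly one exponent n ≡ i (mod p) at which the coefficient of f is nonzero. If g also has property (*) and f ≡ g (mod (tᵖ - 1)²), then f = g. -/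
/-! Send `T ^ n` to `(1 + n ε) · [n mod p]` in the group ring of `ZMod p` over the dual numbers.
This is a ring homomorphism taking `T ^ p - 1` to `p ε · [0]`, so it kills `(T ^ p - 1) ^ 2`. Its
coefficient at a residue class `i` is `∑ aₙ + (∑ n aₙ) ε`, the sums running over the exponents
`n ≡ i`: congruent Laurent polynomials have the same coefficient sum and the same first moment on
every residue class. Under property (*) each class carries a single term `a T ^ n`, and `a ≠ 0`
together with `n a` determine `n`. -/

open LaurentPolynomial

/-- Property (*): the support of the Laurent polynomial `f` contains exactly one
exponent in each residue class mod `p`. -/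
def PropertyStar (p : ℕ) (f : ℤ[T;T⁻¹]) : Prop :=
  ∀ i : ZMod p, ∃! n : ℤ, (n : ZMod p) = i ∧ f.coeff n ≠ 0

open DualNumber AddMonoidAlgebra

namespace LaurentPolynomial

variable {R : Type*} [CommRing R] (p : ℕ)

noncomputable def residueMomentsChar :
    Multiplicative ℤ →* AddMonoidAlgebra (DualNumber R) (ZMod p) where
  toFun n := single (n.toAdd : ZMod p) (1 + n.toAdd • ε)
  map_one' := by simp [one_def]
  map_mul' m n := by
    rw [single_mul_single, toAdd_mul, Int.cast_add]
    congr 1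
    ext <;> simp [add_smul, add_comm]

noncomputable def residueMoments : R[T;T⁻¹] →ₐ[R] AddMonoidAlgebra (DualNumber R) (ZMod p) :=
  lift R _ _ (residueMomentsChar p)

theorem residueMoments_single (n : ℤ) (a : R) :
    residueMoments p (single n a) = single (n : ZMod p) (a • (1 + n • ε)) := by
  rw [residueMoments, lift_single, residueMomentsChar, MonoidHom.coe_mk, OneHom.coe_mk,
    smul_single]
  rfl

theorem residueMoments_T_sub_one_sq : residueMoments p ((T p - 1 : R[T;T⁻¹]) ^ 2) = 0 := by
  rw [map_pow, map_sub, map_one, T, residueMoments_single, one_def, Int.cast_natCast,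
    ZMod.natCast_self, one_smul, ← single_sub, add_sub_cancel_left, sq, single_mul_single,
    smul_mul_smul_comm, eps_mul_eps, smul_zero, single_zero]

theorem residueMoments_eq_of_sq_dvd_sub {f g : R[T;T⁻¹]}
    (h : (T p - 1 : R[T;T⁻¹]) ^ 2 ∣ f - g) : residueMoments p f = residueMoments p g := by
  obtain ⟨q, hq⟩ := h
  rw [← sub_eq_zero, ← map_sub, hq, map_mul, residueMoments_T_sub_one_sq, zero_mul]

theorem coeff_residueMoments (f : R[T;T⁻¹]) (i : ZMod p) :
    (residueMoments p f).coeff i =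
      ∑ n ∈ f.coeff.support with ((n : ℤ) : ZMod p) = i, f.coeff n • (1 + n • ε) := by
  conv_lhs => rw [← sum_coeff_single f]
  rw [map_finsuppSum, Finsupp.sum, coeff_sum, Finsupp.finsetSum_apply, Finset.sum_filter]
  simp only [residueMoments_single, coeff_single, Finsupp.single_apply]

theorem fst_coeff_residueMoments (f : R[T;T⁻¹]) (i : ZMod p) :
    ((residueMoments p f).coeff i).fst =
      ∑ n ∈ f.coeff.support with ((n : ℤ) : ZMod p) = i, f.coeff n := by
  simp [coeff_residueMoments, TrivSqZeroExt.fst_sum]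

theorem snd_coeff_residueMoments (f : R[T;T⁻¹]) (i : ZMod p) :
    ((residueMoments p f).coeff i).snd =
      ∑ n ∈ f.coeff.support with ((n : ℤ) : ZMod p) = i, n • f.coeff n := by
  simp [coeff_residueMoments, TrivSqZeroExt.snd_sum, mul_comm]

theorem coeff_eq_zero_of_filter_support_eq_singleton {f : R[T;T⁻¹]} {n k : ℤ}
    (h : {m ∈ f.coeff.support | ((m : ℤ) : ZMod p) = n} = {k}) (hnk : n ≠ k) :
    f.coeff n = 0 := by
  by_contra hn
  have : n ∈ {m ∈ f.coeff.support | ((m : ℤ) : ZMod p) = n} := by simpa using hn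
  simp [h, hnk] at this

end LaurentPolynomial

theorem PropertyStar.exists_filter_support_eq_singleton {p : ℕ} {f : ℤ[T;T⁻¹]}
    (hf : PropertyStar p f) (i : ZMod p) :
    ∃ n, f.coeff n ≠ 0 ∧ {m ∈ f.coeff.support | ((m : ℤ) : ZMod p) = i} = {n} := by
  obtain ⟨n, ⟨hni, hn⟩, huniq⟩ := hf i
  refine ⟨n, hn, Finset.eq_singleton_iff_unique_mem.mpr ⟨by simpa [hni] using hn, fun m hm => ?_⟩⟩
  rw [Finset.mem_filter, Finsupp.mem_support_iff] at hm
  exact huniq m ⟨hm.2, hm.1⟩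

theorem stmt8_general (p : ℕ) (f g : ℤ[T;T⁻¹])
    (hf : PropertyStar p f) (hg : PropertyStar p g)
    (hdvd : (T (p : ℤ) - 1 : ℤ[T;T⁻¹]) ^ 2 ∣ f - g) :
    f = g := by
  have hΨ := residueMoments_eq_of_sq_dvd_sub p hdvd
  ext n
  obtain ⟨nf, -, hsf⟩ := hf.exists_filter_support_eq_singleton n
  obtain ⟨ng, hg0, hsg⟩ := hg.exists_filter_support_eq_singleton n
  have hsum : f.coeff nf = g.coeff ng := by
    simpa [fst_coeff_residueMoments, hsf, hsg] using congr((($hΨ).coeff (n : ZMod p)).fst)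
  have hmoment : nf • g.coeff ng = ng • g.coeff ng := by
    simpa [snd_coeff_residueMoments, hsf, hsg, hsum] using congr((($hΨ).coeff (n : ZMod p)).snd)
  obtain rfl : nf = ng := smul_left_injective ℤ hg0 hmoment
  by_cases hn : n = nf
  · rw [hn, hsum]
  · rw [coeff_eq_zero_of_filter_support_eq_singleton p hsf hn,
      coeff_eq_zero_of_filter_support_eq_singleton p hsg hn]

/-- If `f` and `g` both have property (*) for `p > 0` and
`f ≡ g (mod (tᵖ-1)²)`, then `f = g`. -/
theorem stmt8 (p : ℕ) (hp : 0 < p) (f g : ℤ[T;T⁻¹])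
    (hf : PropertyStar p f) (hg : PropertyStar p g)
    (hdvd : (T (p : ℤ) - 1 : ℤ[T;T⁻¹]) ^ 2 ∣ f - g) :
    f = g :=
  stmt8_general p f g hf hg hdvd
end
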